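/- Let 0 < μ < L, Q = L/μ > 1, α = 1/L, and β = (√Q − 1)/(√Q + 1). Then ρ_L(α, β) = 0 and ρ_μ(α, β) = (√Q − 1)/√Q, so that ρ(α, β) = max{ρ_μ(α, β), ρ_L(α, β)} = (√Q − 1)/√Q < 1. -/

import Mathlib

/-- `ρ_λ(α, β)`. -/
noncomputable def rhoLam (α β lam : ℝ) : ℝ :=
  if 0 ≤ (1 + β) ^ 2 * (1 - α * lam) ^ 2 - 4 * β * (1 - α * lam) then
    (1 / 2) * |(1 + β) * (1 - α * lam)| +
      (1 / 2) * Real.sqrt ((1 + β) ^ 2 * (1 - α * lam) ^ 2 - 4 * β * (1 - α * lam))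
  else Real.sqrt (β * (1 - α * lam))

/-!
With `s = √Q`, the step `α = 1/L` annihilates the factor `1 - αL`, so `ρ_L = 0`, while
`1 - αμ = 1 - 1/s²`. The momentum `β = (s - 1)/(s + 1)` is exactly the one for which the
discriminant `Δ_μ` vanishes (critical damping), and then `ρ_μ = |(1 + β)(1 - αμ)|/2 = (s - 1)/s`.
-/

lemma rhoLam_eq_zero_of_mul_eq_one {α β lam : ℝ} (h : α * lam = 1) : rhoLam α β lam = 0 := by
  simp [rhoLam, h]

lemma rhoLam_of_discr_eq_zero {α β lam : ℝ}
    (h : (1 + β) ^ 2 * (1 - α * lam) ^ 2 - 4 * β * (1 - α * lam) = 0) :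
    rhoLam α β lam = |(1 + β) * (1 - α * lam)| / 2 := by
  rw [rhoLam, if_pos h.ge, h, Real.sqrt_zero]
  ring

lemma rhoLam_critical {s α lam : ℝ} (hs : 0 < s) (h : α * lam = 1 / s ^ 2) :
    rhoLam α ((s - 1) / (s + 1)) lam = |s - 1| / s := by
  have hs1 : s + 1 ≠ 0 := by positivity
  have hαlam : 1 - α * lam = (s ^ 2 - 1) / s ^ 2 := by
    rw [h]
    field_simp
  have hdiscr : (1 + (s - 1) / (s + 1)) ^ 2 * (1 - α * lam) ^ 2
      - 4 * ((s - 1) / (s + 1)) * (1 - α * lam) = 0 := by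
    rw [hαlam]
    field_simp
    ring
  have hprod : (1 + (s - 1) / (s + 1)) * (1 - α * lam) = 2 * (s - 1) / s := by
    rw [hαlam]
    field_simp
    ring
  rw [rhoLam_of_discr_eq_zero hdiscr, hprod, mul_div_assoc, abs_mul, abs_div, abs_of_pos hs]
  norm_num

theorem stmt10_general (μ L : ℝ)
    (Q : ℝ) (hQ : Q = L / μ) (hQ1 : 1 < Q)
    (α β : ℝ) (hα : α = 1 / L) (hβ : β = (Real.sqrt Q - 1) / (Real.sqrt Q + 1)) :
    rhoLam α β L = 0 ∧
    rhoLam α β μ = (Real.sqrt Q - 1) / Real.sqrt Q ∧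
    max (rhoLam α β μ) (rhoLam α β L) = (Real.sqrt Q - 1) / Real.sqrt Q ∧
    (Real.sqrt Q - 1) / Real.sqrt Q < 1 := by
  have hL : L ≠ 0 := by
    rintro rfl
    norm_num [hQ] at hQ1
  have hs1 : 1 < Real.sqrt Q := Real.lt_sqrt_of_sq_lt (by simpa using hQ1)
  have hs : 0 < Real.sqrt Q := one_pos.trans hs1
  have hρL : rhoLam α β L = 0 := rhoLam_eq_zero_of_mul_eq_one (by rw [hα, one_div_mul_cancel hL])
  have hρμ : rhoLam α β μ = (Real.sqrt Q - 1) / Real.sqrt Q := by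
    have hαμ : α * μ = 1 / Real.sqrt Q ^ 2 := by
      rw [Real.sq_sqrt (by linarith), hα, hQ, one_div_div]
      ring
    rw [hβ, rhoLam_critical hs hαμ, abs_of_pos (by linarith)]
  have hρμ_nonneg : 0 ≤ (Real.sqrt Q - 1) / Real.sqrt Q := div_nonneg (by linarith) hs.le
  refine ⟨hρL, hρμ, by rw [hρL, hρμ, max_eq_left hρμ_nonneg], ?_⟩
  rw [div_lt_one hs]
  linarith

/-- With `α = 1/L` and `β = (√Q−1)/(√Q+1)` one has `ρ_L(α,β) = 0`,
`ρ_μ(α,β) = (√Q−1)/√Q`, and hence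
`ρ(α,β) = max {ρ_μ(α,β), ρ_L(α,β)} = (√Q−1)/√Q < 1`. -/
theorem stmt10 (μ L : ℝ) (hμ : 0 < μ) (hμL : μ < L)
    (Q : ℝ) (hQ : Q = L / μ) (hQ1 : 1 < Q)
    (α β : ℝ) (hα : α = 1 / L) (hβ : β = (Real.sqrt Q - 1) / (Real.sqrt Q + 1)) :
    rhoLam α β L = 0 ∧
    rhoLam α β μ = (Real.sqrt Q - 1) / Real.sqrt Q ∧
    max (rhoLam α β μ) (rhoLam α β L) = (Real.sqrt Q - 1) / Real.sqrt Q ∧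
    (Real.sqrt Q - 1) / Real.sqrt Q < 1 :=
  stmt10_general μ L Q hQ hQ1 α β hα hβ
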